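/- Assume further that each task's transitions carry a per-task program order: for each task there is a strict total order on its transitions that every transition sequence respects. Let r and r' be transitions belonging to two distinct tasks that execute on the same thread, and suppose p_j, …, p₁ and q_j, …, q₁ are post transitions such that: p₁ posts the task of r and q₁ posts the task of r'; for each 1 ≤ l < j, p_{l+1} posts the task of p_l and q_{l+1} posts the task of q_l; for each 1 ≤ l ≤ j, dest p_l = dest q_l; for each 1 ≤ l < j the tasks of p_l and q_l are distinct; and the chains merge at level j: p_j and q_j belong to the same task, with p_j preceding q_j in that task's program order. Then in every transition sequence in which r, r', and all of p₁, …, p_j, q₁, …, q_j occur, r occurs before r': when r and r' have no diverging posts, their relative order of execution is fixed. -/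
import Mathlib


/-- An event-driven multi-threaded program, modeled abstractly as a
transition system. -/
structure Sys (S T R : Type) where
  thread : R → T
  next : S → T → Option R
  enabled : R → S → Prop
  step : R → S → S
  next_thread : ∀ {s t r}, next s t = some r → thread r = t
  enabled_next : ∀ {r s}, enabled r s → next s (thread r) = some r

namespace Sys

variable {S T R : Type}

/-- `r` belongs to `nextTrans s`: it is the next transition of its thread at `s`. -/
def inNext (M : Sys S T R) (s : S) (r : R) : Prop :=
  M.next s (M.thread r) = some r

/-- `r` is blocked at `s`. -/
def blockedAt (M : Sys S T R) (s : S) (r : R) : Prop :=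
  M.inNext s r ∧ ¬ M.enabled r s

/-- `Seq M s w s'`: `w` is a transition sequence from `s` ending at `s'`. -/
inductive Seq (M : Sys S T R) : S → List R → S → Prop
  | nil (s : S) : Seq M s [] s
  | cons {s : S} {r : R} {w : List R} {s'' : S} :
      M.enabled r s → Seq M (M.step r s) w s'' → Seq M s (r :: w) s''

def Reachable (M : Sys S T R) (s s' : S) : Prop :=
  ∃ w, M.Seq s w s'

/-- Well-formedness of the system: no transition occurs twice in a transition
sequence, and a transition that has been executed never again belongs to
`nextTrans` at a later state of that sequence. -/
def Wf (M : Sys S T R) : Prop :=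
  ∀ s w s', M.Seq s w s' → w.Nodup ∧ ∀ r ∈ w, ¬ M.inNext s' r

/-- `D` is a valid dependence relation. -/
def ValidDep (M : Sys S T R) (D : R → R → Prop) : Prop :=
  (∀ r, D r r) ∧ (∀ a b, D a b → D b a) ∧
  ∀ r₁ r₂, ¬ D r₁ r₂ → ∀ s, M.enabled r₁ s →
    (M.inNext s r₂ ↔ M.inNext (M.step r₁ s) r₂) ∧
    (M.enabled r₂ s ↔ M.enabled r₂ (M.step r₁ s)) ∧
    (M.enabled r₂ s → M.step r₂ (M.step r₁ s) = M.step r₁ (M.step r₂ s))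

/-- `u` (a transition sequence from `s` ending at `sm`) is a dependence-covering
sequence of `w` (a transition sequence from `s` ending at `sn`). -/
def DepCovering (M : Sys S T R) (D : R → R → Prop)
    (s : S) (w : List R) (sn : S) (u : List R) (sm : S) : Prop :=
  M.Seq s w sn ∧ M.Seq s u sm ∧ (∀ r ∈ w, r ∈ u) ∧
  ∀ a b, D a b → List.Sublist [a, b] u →
    (List.Sublist [a, b] w) ∨
    (a ∈ w ∧ M.inNext sn b) ∨
    (a ∉ w ∧ M.inNext sn b ∧ ∃ ext s', M.Seq sn ext s' ∧ List.Sublist [a, b] ext) ∨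
    (b ∉ w ∧ ¬ M.inNext sn b)

/-- `L` is a dependence-covering set at `s`. -/
def DepCovSet (M : Sys S T R) (D : R → R → Prop) (s : S) (L : Set R) : Prop :=
  L.Nonempty ∧ (∀ r ∈ L, M.enabled r s) ∧
  ∀ w sn, M.Seq s w sn → w ≠ [] →
    ∃ r u' sm, r ∈ L ∧ M.DepCovering D s w sn (r :: u') sm

/-- `⟨DC, ρ⟩` is a deadlock cycle at state `s`. -/
def IsDeadlockCycle (M : Sys S T R) {n : ℕ} (DC : Set R) (ρ : ZMod n → R) (s : S) : Prop :=
  0 < n ∧ Function.Injective ρ ∧ Set.range ρ = DC ∧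
  (∀ r ∈ DC, M.blockedAt s r) ∧
  ∀ (i : ZMod n) (s' : S), M.Reachable s s' → M.blockedAt s' (ρ i) →
    ∀ r, M.enabled r s' → M.enabled (ρ i) (M.step r s') →
      M.thread r = M.thread (ρ (i + 1))

end Sys

/-- An event-driven multi-threaded program with tasks (event-handler
instances): each transition belongs to a task, all transitions of one task
execute on one thread, and each post transition designates a posted task whose
transitions all execute on the destination thread of the post. -/
structure ESys (S T R τ : Type) extends Sys S T R where
  task : R → τ
  taskThread : τ → T
  thread_eq : ∀ r, thread r = taskThread (task r)
  isPost : R → Prop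
  posted : R → τ
  dest : R → T
  posted_thread : ∀ p, isPost p → taskThread (posted p) = dest p

namespace ESys

variable {S T R τ : Type}

/-- Posted tasks are handled atomically and in FIFO order: if posts `a` and `b`
to the same destination thread (posting distinct tasks) occur in a transition
sequence with `a` before `b`, then every transition of the task posted by `a`
occurring in the sequence precedes every transition of the task posted by `b`
occurring in the sequence. -/
def FIFO (E : ESys S T R τ) : Prop :=
  ∀ s w s', E.toSys.Seq s w s' →
    ∀ a b, E.isPost a → E.isPost b → E.dest a = E.dest b →
      E.posted a ≠ E.posted b → List.Sublist [a, b] w →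
      ∀ x y, E.task x = E.posted a → E.task y = E.posted b →
        x ∈ w → y ∈ w → List.Sublist [x, y] w

end ESys

/-- If the post chains of `r` and `r'` merge (no diverging
posts), with the merging posts ordered by the per-task program order, then the
relative order of execution of `r` and `r'` is fixed: `r` occurs before `r'`
in every transition sequence in which all of them occur. -/
theorem no_diverging_posts_fixed_order
    {S T R τ : Type} (E : ESys S T R τ) (hfifo : E.FIFO) (hwf : E.toSys.Wf)
    (prog : R → R → Prop)
    (hprog_task : ∀ a b, prog a b → E.task a = E.task b)
    (hprog_irrefl : ∀ a, ¬ prog a a)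
    (hprog_trans : ∀ a b c, prog a b → prog b c → prog a c)
    (hprog_total : ∀ a b, E.task a = E.task b → a ≠ b → prog a b ∨ prog b a)
    (hprog_respect : ∀ s w s', E.toSys.Seq s w s' →
      ∀ a b, a ∈ w → b ∈ w → prog a b → List.Sublist [a, b] w)
    {r r' : R}
    (hth : E.toSys.thread r = E.toSys.thread r')
    (htk : E.task r ≠ E.task r')
    {j : ℕ} (hj : 0 < j) (p q : Fin j → R)
    (hpost : ∀ l, E.isPost (p l) ∧ E.isPost (q l))
    (hp0 : E.posted (p ⟨0, hj⟩) = E.task r)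
    (hq0 : E.posted (q ⟨0, hj⟩) = E.task r')
    (hpchain : ∀ (l : ℕ) (h : l + 1 < j),
      E.posted (p ⟨l + 1, h⟩) = E.task (p ⟨l, by omega⟩))
    (hqchain : ∀ (l : ℕ) (h : l + 1 < j),
      E.posted (q ⟨l + 1, h⟩) = E.task (q ⟨l, by omega⟩))
    (hdest : ∀ l, E.dest (p l) = E.dest (q l))
    (hdistinct : ∀ (l : ℕ) (h : l + 1 < j),
      E.task (p ⟨l, by omega⟩) ≠ E.task (q ⟨l, by omega⟩))
    (hmerge : E.task (p ⟨j - 1, by omega⟩) = E.task (q ⟨j - 1, by omega⟩))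
    (hmerge_ord : prog (p ⟨j - 1, by omega⟩) (q ⟨j - 1, by omega⟩))
    {s s' : S} {w : List R} (hw : E.toSys.Seq s w s')
    (hrin : r ∈ w) (hr'in : r' ∈ w)
    (hall : ∀ l, p l ∈ w ∧ q l ∈ w) :
    List.Sublist [r, r'] w := by
  -- Step lemma: from order of posts at level l+1, derive order at level l via FIFO.
  have hstep : ∀ (l : ℕ) (h : l + 1 < j),
      List.Sublist [p ⟨l+1, h⟩, q ⟨l+1, h⟩] w →
      List.Sublist [p ⟨l, by omega⟩, q ⟨l, by omega⟩] w := by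
    intro l h hsub
    have hne : E.posted (p ⟨l+1, h⟩) ≠ E.posted (q ⟨l+1, h⟩) := by
      rw [hpchain l h, hqchain l h]; exact hdistinct l h
    exact hfifo s w s' hw _ _ (hpost _).1 (hpost _).2 (hdest _) hne hsub
      (p ⟨l, by omega⟩) (q ⟨l, by omega⟩) (hpchain l h).symm (hqchain l h).symm
      (hall _).1 (hall _).2
  -- Descend the chain from the merge level down to level 0.
  have key : ∀ d, d < j →
      List.Sublist [p ⟨j-1-d, by omega⟩, q ⟨j-1-d, by omega⟩] w := by
    intro d
    induction d with
    | zero =>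
      intro _
      exact hprog_respect s w s' hw _ _ (hall _).1 (hall _).2 hmerge_ord
    | succ d ih =>
      intro hd
      have h1 : (j - 1 - (d + 1)) + 1 < j := by omega
      have e : (⟨j-1-d, by omega⟩ : Fin j) = ⟨(j-1-(d+1))+1, h1⟩ := by
        apply Fin.ext; simp; omega
      have hprev := ih (by omega)
      rw [e] at hprev
      exact hstep _ h1 hprev
  have h0 := key (j-1) (by omega)
  have e0 : (⟨j-1-(j-1), by omega⟩ : Fin j) = ⟨0, hj⟩ := by
    apply Fin.ext; simp
  rw [e0] at h0
  have hne0 : E.posted (p ⟨0, hj⟩) ≠ E.posted (q ⟨0, hj⟩) := by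
    rw [hp0, hq0]; exact htk
  exact hfifo s w s' hw _ _ (hpost _).1 (hpost _).2 (hdest _) hne0 h0
    r r' hp0.symm hq0.symm hrin hr'in
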